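/- Let K be a field containing a primitive 8th root of unity ζ, and let α ∈ K with α ≠ 0. Set β = (2α − 1)(α − 1) and γ = β/α, and assume the Weierstrass curve E(β, γ) : y² + (1 − γ)xy − βy = x³ − βx² over K is nonsingular (i.e., its discriminant is nonzero). Then the point P = (0, 0) lies on the curve, has exact order 8 in the group of points, and ∑_{j=1}^{7} ζ^j x(jP) = −α^{−1}(α − 1)(α² + 2λα − λ), where λ = ζ + ζ^{−1} and x(jP) denotes the x-coordinate of the point jP (which is an affine point for 1 ≤ j ≤ 7 since P has order 8). -/

import Mathlib

/-!
In Tate normal form `E(b, c)` the multiples of `P = (0, 0)` are `2P = (b, bc)` and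
`3P = (c, b - c)`, obtained by adding `P` along lines of slope `y / x`. For the `m = 8` family,
adding `P` once more gives `4P = (α(α - 1), α(α - 1)²)`, which equals its own negative, so `P` has
order `8`. Since `(8 - j)P = -(jP)` has the same `x`-coordinate as `jP`, the character sum
collapses to `λ (x(P) - x(3P)) - x(4P) = -λγ - α(α - 1)`.
-/

/-- The `x`-coordinate of a nonsingular rational point on a Weierstrass curve
(with the point at infinity sent to `0`). -/
noncomputable def ptX {K : Type*} [Field K] {W : WeierstrassCurve.Affine K} : W.Point → K
  | .zero => 0
  | .some x _ _ => x

open WeierstrassCurve WeierstrassCurve.Affine Point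

section

variable {F : Type*} [Field F]

lemma IsPrimitiveRoot.pow_four_eq_neg_one {ζ : F} (hζ : IsPrimitiveRoot ζ 8) : ζ ^ 4 = -1 :=
  (hζ.pow_of_dvd (by norm_num) (by norm_num)).eq_neg_one_of_two_right

section CharSum

variable {W : Affine F}

@[simp]
lemma ptX_some {x y : F} (h : W.Nonsingular x y) : ptX (some x y h) = x := rfl

@[simp]
lemma ptX_neg (P : W.Point) : ptX (-P) = ptX P := by
  cases P <;> rfl

lemma ptX_sub_nsmul_of_nsmul_eq_zero [DecidableEq F] {P : W.Point} {n : ℕ} (hP : n • P = 0)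
    {j : ℕ} (hj : j ≤ n) : ptX ((n - j) • P) = ptX (j • P) := by
  rw [sub_nsmul P hj, hP, zero_add, ptX_neg]

theorem sum_Icc_pow_mul_ptX_nsmul_of_eight_nsmul_eq_zero [DecidableEq F] {P : W.Point}
    (hP : 8 • P = 0) {ζ : F} (hζ : IsPrimitiveRoot ζ 8) :
    ∑ j ∈ Finset.Icc 1 7, ζ ^ j * ptX (j • P) =
      (ζ + ζ⁻¹) * (ptX P - ptX (3 • P)) - ptX (4 • P) := by
  have hζ4 := hζ.pow_four_eq_neg_one
  have hζinv : ζ⁻¹ = -ζ ^ 3 := inv_eq_of_mul_eq_one_right (by linear_combination -hζ4)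
  have h7 : ptX (7 • P) = ptX P := by
    simpa using ptX_sub_nsmul_of_nsmul_eq_zero hP (j := 1) (by norm_num)
  have h6 : ptX (6 • P) = ptX (2 • P) := ptX_sub_nsmul_of_nsmul_eq_zero hP (j := 2) (by norm_num)
  have h5 : ptX (5 • P) = ptX (3 • P) := ptX_sub_nsmul_of_nsmul_eq_zero hP (j := 3) (by norm_num)
  rw [show Finset.Icc 1 7 = {1, 2, 3, 4, 5, 6, 7} from rfl]
  simp only [Finset.mem_insert, OfNat.one_ne_ofNat, Finset.mem_singleton, or_self,
    not_false_eq_true, Finset.sum_insert, pow_one, one_smul, Nat.reduceEqDiff, Finset.sum_singleton]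
  -- the terms `j` and `8 - j` pair up with weights `ζ ^ j + ζ⁻¹ ^ j = λ, 0, -λ` for `j = 1, 2, 3`
  rw [h7, h6, h5, hζinv]
  linear_combination (ptX P * ζ ^ 3 + ptX (2 • P) * ζ ^ 2 + ptX (3 • P) * ζ + ptX (4 • P)) * hζ4

end CharSum

/-- The Tate normal form, written `E(b, c)` in Kubert's parametrization. -/
def tateNormal (b c : F) : Affine F where
  a₁ := 1 - c
  a₂ := -b
  a₃ := -b
  a₄ := 0
  a₆ := 0

namespace tateNormal

variable {b c α : F}

lemma equation_iff {x y : F} :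
    (tateNormal b c).Equation x y ↔ y ^ 2 + (1 - c) * x * y - b * y = x ^ 3 - b * x ^ 2 := by
  rw [Affine.equation_iff]; simp only [tateNormal]; constructor <;> intro h <;> linear_combination h

lemma negY_eq (x y : F) : (tateNormal b c).negY x y = -y - (1 - c) * x + b := by
  simp only [negY, tateNormal]; ring

lemma ne_zero_of_Δ_ne_zero (hΔ : (tateNormal b c).Δ ≠ 0) : b ≠ 0 := by
  rintro rfl
  exact hΔ (by simp [tateNormal, Δ, b₂, b₄, b₆, b₈])

lemma nonsingular_zero_zero (hb : b ≠ 0) : (tateNormal b c).Nonsingular 0 0 := by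
  rw [nonsingular_iff', equation_iff]
  exact ⟨by ring, Or.inr (by simpa [tateNormal] using hb)⟩

lemma nonsingular_of_equation (hΔ : (tateNormal b c).Δ ≠ 0) {x y : F}
    (h : y ^ 2 + (1 - c) * x * y - b * y = x ^ 3 - b * x ^ 2) : (tateNormal b c).Nonsingular x y :=
  (equation_iff_nonsingular_of_Δ_ne_zero hΔ).mp (equation_iff.mpr h)

lemma nonsingular_mul_sub_one (hα : α ≠ 0) (hb : b = (2 * α - 1) * (α - 1)) (hc : c = b / α)
    (hΔ : (tateNormal b c).Δ ≠ 0) :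
    (tateNormal b c).Nonsingular (α * (α - 1)) (α * (α - 1) ^ 2) :=
  nonsingular_of_equation hΔ (by subst hb hc; field_simp; ring)

variable [DecidableEq F] {h₀ : (tateNormal b c).Nonsingular 0 0}

lemma some_add_zero_zero {x y x' y' : F} {h : (tateNormal b c).Nonsingular x y}
    (h' : (tateNormal b c).Nonsingular x' y') (hx : x ≠ 0)
    (hx' : x' = (y / x) ^ 2 + (1 - c) * (y / x) + b - x)
    (hy' : y' = -(y / x) * (x' - x) - y - (1 - c) * x' + b) :
    some x y h + some 0 0 h₀ = some x' y' h' := by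
  subst hy' hx'
  rw [add_of_X_ne hx, some.injEq, slope_of_X_ne hx, addY, negY_eq]
  simp only [addX, negAddY, tateNormal]
  constructor <;> ring

theorem two_nsmul_zero_zero (hb : b ≠ 0) (h₂ : (tateNormal b c).Nonsingular b (b * c)) :
    2 • some 0 0 h₀ = some b (b * c) h₂ := by
  have hY : (0 : F) ≠ (tateNormal b c).negY 0 0 := by simpa [tateNormal] using hb.symm
  rw [two_nsmul, add_self_of_Y_ne hY, some.injEq, slope_of_Y_ne rfl hY, addY]
  simp only [negY_eq, addX, negAddY]
  simp only [tateNormal]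
  constructor <;> field_simp <;> ring

theorem three_nsmul_zero_zero (hΔ : (tateNormal b c).Δ ≠ 0)
    (h₃ : (tateNormal b c).Nonsingular c (b - c)) : 3 • some 0 0 h₀ = some c (b - c) h₃ := by
  have hb := ne_zero_of_Δ_ne_zero hΔ
  have h₂ : (tateNormal b c).Nonsingular b (b * c) := nonsingular_of_equation hΔ (by ring)
  rw [succ_nsmul, two_nsmul_zero_zero hb h₂]
  exact some_add_zero_zero h₃ hb (by field_simp; ring) (by field_simp; ring)

lemma ptX_three_nsmul_zero_zero (hΔ : (tateNormal b c).Δ ≠ 0) : ptX (3 • some 0 0 h₀) = c := by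
  rw [three_nsmul_zero_zero hΔ (nonsingular_of_equation hΔ (by ring))]
  rfl

theorem four_nsmul_zero_zero (hα : α ≠ 0) (hb : b = (2 * α - 1) * (α - 1)) (hc : c = b / α)
    (hΔ : (tateNormal b c).Δ ≠ 0) :
    4 • some 0 0 h₀ = some _ _ (nonsingular_mul_sub_one hα hb hc hΔ) := by
  have hb₀ := ne_zero_of_Δ_ne_zero hΔ
  have hc₀ : c ≠ 0 := hc ▸ div_ne_zero hb₀ hα
  have hslope : (b - c) / c = α - 1 := by
    rw [div_eq_iff hc₀, hc]; field_simp
  rw [succ_nsmul, three_nsmul_zero_zero hΔ (nonsingular_of_equation hΔ (by ring))]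
  refine some_add_zero_zero _ hc₀ ?_ ?_ <;> rw [hslope] <;> subst hb hc <;> field_simp <;> ring

theorem eight_nsmul_zero_zero (hα : α ≠ 0) (hb : b = (2 * α - 1) * (α - 1)) (hc : c = b / α)
    (hΔ : (tateNormal b c).Δ ≠ 0) : 8 • some 0 0 h₀ = 0 := by
  rw [show 8 = 4 + 4 from rfl, add_nsmul, four_nsmul_zero_zero hα hb hc hΔ]
  exact add_self_of_Y_eq (by rw [negY_eq]; subst hb hc; field_simp; ring)

theorem addOrderOf_zero_zero (hα : α ≠ 0) (hb : b = (2 * α - 1) * (α - 1)) (hc : c = b / α)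
    (hΔ : (tateNormal b c).Δ ≠ 0) : addOrderOf (some 0 0 h₀) = 8 :=
  addOrderOf_eq_prime_pow (p := 2) (n := 2)
    (by rw [show 2 ^ 2 = 4 from rfl, four_nsmul_zero_zero hα hb hc hΔ]; exact some_ne_zero _)
    (eight_nsmul_zero_zero hα hb hc hΔ)

end tateNormal

end

open Classical in
/-- **The `m = 8` family of Table 2 (Kubert's parametrization).** Let `α ≠ 0`,
`β = (2α - 1)(α - 1)` and `γ = β/α`. On the nonsingular Weierstrass curve
`E(β, γ) : y² + (1 - γ)xy - βy = x³ - βx²` over a field containing a primitive 8th root of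
unity `ζ`, the point `P = (0, 0)` is a nonsingular point of exact order 8, and the character
sum `∑_{j=1}^{7} ζ^j x(jP)` equals `-α⁻¹(α - 1)(α² + 2λα - λ)` where `λ = ζ + ζ⁻¹`. -/
theorem order_eight_family_charSum {K : Type*} [Field K] (ζ : K) (hζ : IsPrimitiveRoot ζ 8)
    (α β γ : K) (hα : α ≠ 0) (hβ : β = (2 * α - 1) * (α - 1)) (hγ : γ = β / α)
    (W : WeierstrassCurve.Affine K)
    (hW : W = { a₁ := 1 - γ, a₂ := -β, a₃ := -β, a₄ := 0, a₆ := 0 })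
    (hΔ : W.Δ ≠ 0) :
    ∃ h : W.Nonsingular 0 0, addOrderOf (WeierstrassCurve.Affine.Point.some 0 0 h) = 8 ∧
      ∑ j ∈ Finset.Icc 1 7, ζ ^ j * ptX (j • WeierstrassCurve.Affine.Point.some 0 0 h) =
        -α⁻¹ * (α - 1) * (α ^ 2 + 2 * (ζ + ζ⁻¹) * α - (ζ + ζ⁻¹)) := by
  obtain rfl : W = tateNormal β γ := hW
  refine ⟨tateNormal.nonsingular_zero_zero (tateNormal.ne_zero_of_Δ_ne_zero hΔ),
    tateNormal.addOrderOf_zero_zero hα hβ hγ hΔ, ?_⟩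
  rw [sum_Icc_pow_mul_ptX_nsmul_of_eight_nsmul_eq_zero
      (tateNormal.eight_nsmul_zero_zero hα hβ hγ hΔ) hζ,
    tateNormal.ptX_three_nsmul_zero_zero hΔ, tateNormal.four_nsmul_zero_zero hα hβ hγ hΔ]
  simp only [ptX_some]
  subst hβ hγ
  field_simp
  ring
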